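/- Inside the polynomial ring F[x,y,z], the intersection 𝒮 ∩ xz·F[x,y,z] equals the ideal of 𝒮 generated by xz and xz², and the intersection 𝒮 ∩ x·F[x,y,z] equals the ideal of 𝒮 generated by x, xz and xz². -/
import Mathlib

set_option maxHeartbeats 1000000
set_option synthInstance.maxHeartbeats 400000

open MvPolynomial

/-- The ring `𝒮`: the `F`-subalgebra of `F[x,y,z]` generated by the six monomials
`x, xz, xz², y, yz, yz²` (the variables `x, y, z` are indexed by `0, 1, 2`). -/
noncomputable def toricS (F : Type*) [CommRing F] : Subalgebra F (MvPolynomial (Fin 3) F) :=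
  Algebra.adjoin F {X 0, X 0 * X 2, X 0 * X 2 ^ 2, X 1, X 1 * X 2, X 1 * X 2 ^ 2}

/-- `x ∈ 𝒮`. -/
lemma x_mem_toricS (F : Type*) [CommRing F] : (X 0 : MvPolynomial (Fin 3) F) ∈ toricS F :=
  Algebra.subset_adjoin (Or.inl rfl)

/-- `xz ∈ 𝒮`. -/
lemma xz_mem_toricS (F : Type*) [CommRing F] : (X 0 * X 2 : MvPolynomial (Fin 3) F) ∈ toricS F :=
  Algebra.subset_adjoin (Or.inr (Or.inl rfl))

/-- `xz² ∈ 𝒮`. -/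
lemma xz2_mem_toricS (F : Type*) [CommRing F] :
    (X 0 * X 2 ^ 2 : MvPolynomial (Fin 3) F) ∈ toricS F :=
  Algebra.subset_adjoin (Or.inr (Or.inr (Or.inl rfl)))

lemma y_mem_toricS (F : Type*) [CommRing F] : (X 1 : MvPolynomial (Fin 3) F) ∈ toricS F :=
  Algebra.subset_adjoin (Or.inr (Or.inr (Or.inr (Or.inl rfl))))

lemma yz_mem_toricS (F : Type*) [CommRing F] :
    (X 1 * X 2 : MvPolynomial (Fin 3) F) ∈ toricS F :=
  Algebra.subset_adjoin (Or.inr (Or.inr (Or.inr (Or.inr (Or.inl rfl)))))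

lemma yz2_mem_toricS (F : Type*) [CommRing F] :
    (X 1 * X 2 ^ 2 : MvPolynomial (Fin 3) F) ∈ toricS F :=
  Algebra.subset_adjoin (Or.inr (Or.inr (Or.inr (Or.inr (Or.inr rfl)))))

section Aux

variable {F : Type*} [CommRing F]

/-- Every monomial `x^a y^b z^c` with `c ≤ 2(a+b)` lies in `𝒮`. -/
lemma pow_mem_toricS_aux (F : Type*) [CommRing F] :
    ∀ n a b c : ℕ, a + b ≤ n → c ≤ 2 * (a + b) →
      (X 0 ^ a * X 1 ^ b * X 2 ^ c : MvPolynomial (Fin 3) F) ∈ toricS F := by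
  intro n
  induction n with
  | zero =>
    intro a b c h1 h2
    obtain rfl : a = 0 := by omega
    obtain rfl : b = 0 := by omega
    obtain rfl : c = 0 := by omega
    simpa using one_mem (toricS F)
  | succ n ih =>
    intro a b c h1 h2
    rcases a with _ | a
    · rcases b with _ | b
      · obtain rfl : c = 0 := by omega
        simpa using one_mem (toricS F)
      · rcases c with _ | c
        · have e : (X 0 ^ 0 * X 1 ^ (b + 1) * X 2 ^ 0 : MvPolynomial (Fin 3) F)
              = X 1 * (X 0 ^ 0 * X 1 ^ b * X 2 ^ 0) := by ring
          rw [e]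
          exact mul_mem (y_mem_toricS F) (ih 0 b 0 (by omega) (by omega))
        · rcases c with _ | c
          · have e : (X 0 ^ 0 * X 1 ^ (b + 1) * X 2 ^ 1 : MvPolynomial (Fin 3) F)
                = (X 1 * X 2) * (X 0 ^ 0 * X 1 ^ b * X 2 ^ 0) := by ring
            rw [e]
            exact mul_mem (yz_mem_toricS F) (ih 0 b 0 (by omega) (by omega))
          · have e : (X 0 ^ 0 * X 1 ^ (b + 1) * X 2 ^ (c + 2) : MvPolynomial (Fin 3) F)
                = (X 1 * X 2 ^ 2) * (X 0 ^ 0 * X 1 ^ b * X 2 ^ c) := by ring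
            rw [e]
            exact mul_mem (yz2_mem_toricS F) (ih 0 b c (by omega) (by omega))
    · rcases c with _ | c
      · have e : (X 0 ^ (a + 1) * X 1 ^ b * X 2 ^ 0 : MvPolynomial (Fin 3) F)
            = X 0 * (X 0 ^ a * X 1 ^ b * X 2 ^ 0) := by ring
        rw [e]
        exact mul_mem (x_mem_toricS F) (ih a b 0 (by omega) (by omega))
      · rcases c with _ | c
        · have e : (X 0 ^ (a + 1) * X 1 ^ b * X 2 ^ 1 : MvPolynomial (Fin 3) F)
              = (X 0 * X 2) * (X 0 ^ a * X 1 ^ b * X 2 ^ 0) := by ring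
          rw [e]
          exact mul_mem (xz_mem_toricS F) (ih a b 0 (by omega) (by omega))
        · have e : (X 0 ^ (a + 1) * X 1 ^ b * X 2 ^ (c + 2) : MvPolynomial (Fin 3) F)
              = (X 0 * X 2 ^ 2) * (X 0 ^ a * X 1 ^ b * X 2 ^ c) := by ring
          rw [e]
          exact mul_mem (xz2_mem_toricS F) (ih a b c (by omega) (by omega))

lemma pow_mem_toricS (a b c : ℕ) (h : c ≤ 2 * (a + b)) :
    (X 0 ^ a * X 1 ^ b * X 2 ^ c : MvPolynomial (Fin 3) F) ∈ toricS F :=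
  pow_mem_toricS_aux F (a + b) a b c le_rfl h

/-- The subalgebra of polynomials all of whose monomials `x^a y^b z^c` satisfy
`c ≤ 2(a+b)`. -/
noncomputable def condAlg (F : Type*) [CommRing F] :
    Subalgebra F (MvPolynomial (Fin 3) F) where
  carrier := {p | ∀ d ∈ p.support, d 2 ≤ 2 * (d 0 + d 1)}
  mul_mem' := by
    intro p q hp hq d hd
    classical
    have h := MvPolynomial.support_mul p q hd
    rw [Finset.mem_add] at h
    obtain ⟨u, hu, v, hv, rfl⟩ := h
    have h1 := hp u hu
    have h2 := hq v hv
    simp only [Finsupp.add_apply]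
    omega
  add_mem' := by
    intro p q hp hq d hd
    classical
    rcases Finset.mem_union.1 (MvPolynomial.support_add hd) with h | h
    · exact hp d h
    · exact hq d h
  algebraMap_mem' := by
    intro r d hd
    rw [MvPolynomial.algebraMap_eq, mem_support_iff, coeff_C] at hd
    split_ifs at hd with h
    · rw [← h]
      simp
    · exact absurd rfl hd

lemma pow_eq_monomial (a b c : ℕ) :
    (X 0 ^ a * X 1 ^ b * X 2 ^ c : MvPolynomial (Fin 3) F)
      = monomial (Finsupp.single 0 a + Finsupp.single 1 b + Finsupp.single 2 c) 1 := by
  rw [X_pow_eq_monomial, X_pow_eq_monomial, X_pow_eq_monomial, monomial_mul, monomial_mul,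
    one_mul, one_mul]

lemma pow_mem_condAlg (a b c : ℕ) (h : c ≤ 2 * (a + b)) :
    (X 0 ^ a * X 1 ^ b * X 2 ^ c : MvPolynomial (Fin 3) F) ∈ condAlg F := by
  intro d hd
  rw [pow_eq_monomial] at hd
  have hd' := MvPolynomial.support_monomial_subset hd
  rw [Finset.mem_singleton] at hd'
  subst hd'
  have e0 : ((Finsupp.single 0 a + Finsupp.single 1 b + Finsupp.single 2 c : Fin 3 →₀ ℕ)) 0 = a := by
    simp [Finsupp.single_apply]
  have e1 : ((Finsupp.single 0 a + Finsupp.single 1 b + Finsupp.single 2 c : Fin 3 →₀ ℕ)) 1 = b := by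
    simp [Finsupp.single_apply]
  have e2 : ((Finsupp.single 0 a + Finsupp.single 1 b + Finsupp.single 2 c : Fin 3 →₀ ℕ)) 2 = c := by
    simp [Finsupp.single_apply]
  rw [e0, e1, e2]
  omega

lemma monomial_fin3 (d : Fin 3 →₀ ℕ) (c : F) :
    monomial d c = C c * (X 0 ^ d 0 * X 1 ^ d 1 * X 2 ^ d 2 : MvPolynomial (Fin 3) F) := by
  rw [monomial_eq, Finsupp.prod_fintype _ _ (fun i => pow_zero _), Fin.prod_univ_three]

/-- Membership in `𝒮` is characterized by the support condition. -/
lemma mem_toricS_iff (p : MvPolynomial (Fin 3) F) :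
    p ∈ toricS F ↔ ∀ d ∈ p.support, d 2 ≤ 2 * (d 0 + d 1) := by
  constructor
  · intro hp
    have hle : toricS F ≤ condAlg F := by
      apply Algebra.adjoin_le
      intro x hx
      simp only [Set.mem_insert_iff, Set.mem_singleton_iff] at hx
      rcases hx with rfl | rfl | rfl | rfl | rfl | rfl
      · simpa using pow_mem_condAlg (F := F) 1 0 0 (by omega)
      · simpa using pow_mem_condAlg (F := F) 1 0 1 (by omega)
      · simpa using pow_mem_condAlg (F := F) 1 0 2 (by omega)
      · simpa using pow_mem_condAlg (F := F) 0 1 0 (by omega)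
      · simpa using pow_mem_condAlg (F := F) 0 1 1 (by omega)
      · simpa using pow_mem_condAlg (F := F) 0 1 2 (by omega)
    exact hle hp
  · intro h
    rw [as_sum p]
    apply sum_mem
    intro d hd
    rw [monomial_fin3]
    refine mul_mem ?_ (pow_mem_toricS (d 0) (d 1) (d 2) (h d hd))
    have := (toricS F).algebraMap_mem (coeff d p)
    rwa [MvPolynomial.algebraMap_eq] at this

lemma X_dvd_iff_supp (i : Fin 3) (p : MvPolynomial (Fin 3) F) :
    X i ∣ p ↔ ∀ d ∈ p.support, d i ≠ 0 := by
  classical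
  constructor
  · rintro ⟨q, rfl⟩ d hd hdi
    rw [mem_support_iff] at hd
    apply hd
    rw [coeff_X_mul', if_neg]
    simp [Finsupp.mem_support_iff, hdi]
  · intro h
    rw [as_sum p]
    exact Finset.dvd_sum fun d hd => X_dvd_monomial.mpr (Or.inr (h d hd))

lemma xz_dvd_iff (p : MvPolynomial (Fin 3) F) :
    (X 0 * X 2 : MvPolynomial (Fin 3) F) ∣ p ↔ ∀ d ∈ p.support, d 0 ≠ 0 ∧ d 2 ≠ 0 := by
  constructor
  · intro h d hd
    refine ⟨(X_dvd_iff_supp 0 p).1 (dvd_trans (dvd_mul_right _ _) h) d hd,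
      (X_dvd_iff_supp 2 p).1 (dvd_trans (dvd_mul_left _ _) h) d hd⟩
  · intro h
    rw [as_sum p]
    apply Finset.dvd_sum
    intro d hd
    obtain ⟨h0, h2⟩ := h d hd
    have e : (X 0 * X 2 : MvPolynomial (Fin 3) F)
        = monomial (Finsupp.single 0 1 + Finsupp.single 2 1) 1 := by
      rw [X, X, monomial_mul, one_mul]
    rw [e, monomial_dvd_monomial]
    refine ⟨Or.inr ?_, one_dvd _⟩
    rw [Finsupp.le_def]
    intro i
    fin_cases i <;> simp [Finsupp.single_apply] <;> omega

/-- Each monomial of `𝒮` divisible by `xz` lies in the ideal `(xz, xz²)`. -/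
lemma monomial_mem_span_xz {d : Fin 3 →₀ ℕ} {c : F} (h0 : d 0 ≠ 0) (h2 : d 2 ≠ 0)
    (hc : d 2 ≤ 2 * (d 0 + d 1)) (hmem : monomial d c ∈ toricS F) :
    (⟨monomial d c, hmem⟩ : toricS F) ∈
      (Ideal.span {(⟨X 0 * X 2, xz_mem_toricS F⟩ : toricS F),
        ⟨X 0 * X 2 ^ 2, xz2_mem_toricS F⟩} : Ideal (toricS F)) := by
  obtain ⟨a, ha⟩ : ∃ a, d 0 = a + 1 := ⟨d 0 - 1, by omega⟩
  by_cases hcc : d 2 = 1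
  · have hr : (C c * (X 0 ^ a * X 1 ^ d 1 * X 2 ^ 0) : MvPolynomial (Fin 3) F) ∈ toricS F := by
      refine mul_mem ?_ (pow_mem_toricS a (d 1) 0 (by omega))
      have := (toricS F).algebraMap_mem c
      rwa [MvPolynomial.algebraMap_eq] at this
    have key : (⟨monomial d c, hmem⟩ : toricS F)
        = ⟨_, hr⟩ * ⟨X 0 * X 2, xz_mem_toricS F⟩ := by
      apply Subtype.ext
      show monomial d c = _ * _
      rw [monomial_fin3, ha, hcc]
      ring
    rw [key]
    exact Ideal.mul_mem_left _ _ (Ideal.subset_span (Or.inl rfl))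
  · obtain ⟨e, he⟩ : ∃ e, d 2 = e + 2 := ⟨d 2 - 2, by omega⟩
    have hr : (C c * (X 0 ^ a * X 1 ^ d 1 * X 2 ^ e) : MvPolynomial (Fin 3) F) ∈ toricS F := by
      refine mul_mem ?_ (pow_mem_toricS a (d 1) e (by omega))
      have := (toricS F).algebraMap_mem c
      rwa [MvPolynomial.algebraMap_eq] at this
    have key : (⟨monomial d c, hmem⟩ : toricS F)
        = ⟨_, hr⟩ * ⟨X 0 * X 2 ^ 2, xz2_mem_toricS F⟩ := by
      apply Subtype.ext
      show monomial d c = _ * _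
      rw [monomial_fin3, ha, he]
      ring
    rw [key]
    exact Ideal.mul_mem_left _ _ (Ideal.subset_span (Or.inr rfl))

/-- Each monomial of `𝒮` divisible by `x` lies in the ideal `(x, xz, xz²)`. -/
lemma monomial_mem_span_x {d : Fin 3 →₀ ℕ} {c : F} (h0 : d 0 ≠ 0)
    (hc : d 2 ≤ 2 * (d 0 + d 1)) (hmem : monomial d c ∈ toricS F) :
    (⟨monomial d c, hmem⟩ : toricS F) ∈
      (Ideal.span {(⟨X 0, x_mem_toricS F⟩ : toricS F), ⟨X 0 * X 2, xz_mem_toricS F⟩,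
        ⟨X 0 * X 2 ^ 2, xz2_mem_toricS F⟩} : Ideal (toricS F)) := by
  obtain ⟨a, ha⟩ : ∃ a, d 0 = a + 1 := ⟨d 0 - 1, by omega⟩
  have hC : (C c : MvPolynomial (Fin 3) F) ∈ toricS F := by
    have := (toricS F).algebraMap_mem c
    rwa [MvPolynomial.algebraMap_eq] at this
  by_cases hz : d 2 = 0
  · have hr : (C c * (X 0 ^ a * X 1 ^ d 1 * X 2 ^ 0) : MvPolynomial (Fin 3) F) ∈ toricS F :=
      mul_mem hC (pow_mem_toricS a (d 1) 0 (by omega))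
    have key : (⟨monomial d c, hmem⟩ : toricS F) = ⟨_, hr⟩ * ⟨X 0, x_mem_toricS F⟩ := by
      apply Subtype.ext
      show monomial d c = _ * _
      rw [monomial_fin3, ha, hz]
      ring
    rw [key]
    exact Ideal.mul_mem_left _ _ (Ideal.subset_span (Or.inl rfl))
  · by_cases hcc : d 2 = 1
    · have hr : (C c * (X 0 ^ a * X 1 ^ d 1 * X 2 ^ 0) : MvPolynomial (Fin 3) F) ∈ toricS F :=
        mul_mem hC (pow_mem_toricS a (d 1) 0 (by omega))
      have key : (⟨monomial d c, hmem⟩ : toricS F)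
          = ⟨_, hr⟩ * ⟨X 0 * X 2, xz_mem_toricS F⟩ := by
        apply Subtype.ext
        show monomial d c = _ * _
        rw [monomial_fin3, ha, hcc]
        ring
      rw [key]
      exact Ideal.mul_mem_left _ _ (Ideal.subset_span (Or.inr (Or.inl rfl)))
    · obtain ⟨e, he⟩ : ∃ e, d 2 = e + 2 := ⟨d 2 - 2, by omega⟩
      have hr : (C c * (X 0 ^ a * X 1 ^ d 1 * X 2 ^ e) : MvPolynomial (Fin 3) F) ∈ toricS F :=
        mul_mem hC (pow_mem_toricS a (d 1) e (by omega))
      have key : (⟨monomial d c, hmem⟩ : toricS F)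
          = ⟨_, hr⟩ * ⟨X 0 * X 2 ^ 2, xz2_mem_toricS F⟩ := by
        apply Subtype.ext
        show monomial d c = _ * _
        rw [monomial_fin3, ha, he]
        ring
      rw [key]
      exact Ideal.mul_mem_left _ _ (Ideal.subset_span (Or.inr (Or.inr rfl)))

/-- A polynomial `p ∈ 𝒮` decomposes inside `𝒮` as the sum of its monomials. -/
lemma toricS_as_sum (p : MvPolynomial (Fin 3) F) (hp : p ∈ toricS F)
    (hm : ∀ d, monomial d (coeff d p) ∈ toricS F) :
    (⟨p, hp⟩ : toricS F) = ∑ d ∈ p.support, (⟨monomial d (coeff d p), hm d⟩ : toricS F) := by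
  apply Subtype.ext
  rw [AddSubmonoidClass.coe_finset_sum]
  exact as_sum p

lemma monomial_coeff_mem (p : MvPolynomial (Fin 3) F) (hp : p ∈ toricS F) :
    ∀ d, monomial d (coeff d p) ∈ toricS F := by
  intro d
  by_cases hd : d ∈ p.support
  · rw [monomial_fin3]
    refine mul_mem ?_ (pow_mem_toricS _ _ _ ((mem_toricS_iff p).1 hp d hd))
    have := (toricS F).algebraMap_mem (coeff d p)
    rwa [MvPolynomial.algebraMap_eq] at this
  · rw [notMem_support_iff] at hd
    rw [hd, map_zero]
    exact zero_mem _

end Aux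

/-- Inside `F[x,y,z]`, the intersection `𝒮 ∩ xz·F[x,y,z]` equals the ideal of `𝒮` generated
by `xz` and `xz²`, and the intersection `𝒮 ∩ x·F[x,y,z]` equals the ideal of `𝒮` generated
by `x`, `xz` and `xz²` (both equalities as subsets of `F[x,y,z]`, identifying an ideal of
`𝒮` with its image under the inclusion `𝒮 ⊆ F[x,y,z]`). -/
theorem toricS_inter_principal (ℓ : ℕ) (hℓ : ℓ.Prime) (hℓ2 : 2 < ℓ)
    (F : Type*) [Field F] [Fintype F] [CharP F ℓ] :
    (Subtype.val '' (Ideal.span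
        {(⟨X 0 * X 2, xz_mem_toricS F⟩ : toricS F), ⟨X 0 * X 2 ^ 2, xz2_mem_toricS F⟩}
        : Set (toricS F))
      = (toricS F : Set (MvPolynomial (Fin 3) F)) ∩
          {p | (X 0 * X 2 : MvPolynomial (Fin 3) F) ∣ p}) ∧
    (Subtype.val '' (Ideal.span
        {(⟨X 0, x_mem_toricS F⟩ : toricS F), ⟨X 0 * X 2, xz_mem_toricS F⟩,
         ⟨X 0 * X 2 ^ 2, xz2_mem_toricS F⟩} : Set (toricS F))
      = (toricS F : Set (MvPolynomial (Fin 3) F)) ∩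
          {p | (X 0 : MvPolynomial (Fin 3) F) ∣ p}) := by
  constructor
  · apply Set.Subset.antisymm
    · rintro _ ⟨q, hq, rfl⟩
      refine ⟨q.2, ?_⟩
      -- every element of the span has value divisible by xz
      let J : Ideal (toricS F) :=
        { carrier := {r | (X 0 * X 2 : MvPolynomial (Fin 3) F) ∣ (r : MvPolynomial (Fin 3) F)}
          add_mem' := fun h1 h2 => dvd_add h1 h2
          zero_mem' := dvd_zero _
          smul_mem' := fun c x hx => Dvd.dvd.mul_left hx _ }
      have hle : Ideal.span {(⟨X 0 * X 2, xz_mem_toricS F⟩ : toricS F),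
          ⟨X 0 * X 2 ^ 2, xz2_mem_toricS F⟩} ≤ J := by
        rw [Ideal.span_le]
        rintro r (rfl | rfl)
        · exact dvd_refl _
        · exact ⟨X 2, by ring⟩
      exact hle hq
    · rintro p ⟨hpS, hdvd⟩
      refine ⟨⟨p, hpS⟩, ?_, rfl⟩
      rw [toricS_as_sum p hpS (monomial_coeff_mem p hpS)]
      apply Ideal.sum_mem
      intro d hd
      obtain ⟨h0, h2⟩ := (xz_dvd_iff p).1 hdvd d hd
      exact monomial_mem_span_xz h0 h2 ((mem_toricS_iff p).1 hpS d hd) _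
  · apply Set.Subset.antisymm
    · rintro _ ⟨q, hq, rfl⟩
      refine ⟨q.2, ?_⟩
      let J : Ideal (toricS F) :=
        { carrier := {r | (X 0 : MvPolynomial (Fin 3) F) ∣ (r : MvPolynomial (Fin 3) F)}
          add_mem' := fun h1 h2 => dvd_add h1 h2
          zero_mem' := dvd_zero _
          smul_mem' := fun c x hx => Dvd.dvd.mul_left hx _ }
      have hle : Ideal.span {(⟨X 0, x_mem_toricS F⟩ : toricS F),
          ⟨X 0 * X 2, xz_mem_toricS F⟩, ⟨X 0 * X 2 ^ 2, xz2_mem_toricS F⟩} ≤ J := by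
        rw [Ideal.span_le]
        rintro r (rfl | rfl | rfl)
        · exact dvd_refl _
        · exact dvd_mul_right _ _
        · exact dvd_mul_right _ _
      exact hle hq
    · rintro p ⟨hpS, hdvd⟩
      refine ⟨⟨p, hpS⟩, ?_, rfl⟩
      rw [toricS_as_sum p hpS (monomial_coeff_mem p hpS)]
      apply Ideal.sum_mem
      intro d hd
      have h0 := (X_dvd_iff_supp 0 p).1 hdvd d hd
      exact monomial_mem_span_x h0 ((mem_toricS_iff p).1 hpS d hd) _
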